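/- Let A be a strongly enforceable advice from s₀ with horizon H satisfying the optimality assumption (for every state s, every horizon-H optimal deterministic strategy σ^{H,*}_{M,s} is contained in σ_A^H). Then the optimal expected total reward in the pruned unfolding equals that in M: Val^H_{T(M,s₀,H,A)}(s₀) = Val^H_M(s₀). -/

import Mathlib

open Finset MeasureTheory Filter Asymptotics
open scoped BigOperators Classical ENNReal

noncomputable section

namespace PaperMCTS

variable {S A : Type}

/-- A (finite) Markov decision process: transition kernel `P`, reward `R`,
terminal reward `RT`. -/
structure MDP (S A : Type) where
  P : S → A → S → ℝ
  R : S → A → ℝ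
  RT : S → ℝ

/-- `P s a` is a probability distribution on states, for every `s, a`. -/
def MDP.IsProper [Fintype S] (M : MDP S A) : Prop :=
  (∀ s a s', 0 ≤ M.P s a s') ∧ ∀ s a, ∑ s', M.P s a s' = 1

/-- A path of length `i`: `i+1` states and `i` actions. -/
abbrev Path (S A : Type) (i : ℕ) : Type := (Fin (i + 1) → S) × (Fin i → A)

def Path.first {i : ℕ} (p : Path S A i) : S := p.1 0

def Path.lastState {i : ℕ} (p : Path S A i) : S := p.1 (Fin.last i)

/-- The prefix of length `j` of a path of length `i ≥ j`. -/
def Path.take {i : ℕ} (p : Path S A i) (j : ℕ) (h : j ≤ i) : Path S A j :=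
  (fun t => p.1 ⟨t, by have := t.isLt; omega⟩,
   fun t => p.2 ⟨t, by have := t.isLt; omega⟩)

/-- Extension of a path by one action and one state: `p · a s`. -/
def Path.snoc {i : ℕ} (p : Path S A i) (a : A) (s : S) : Path S A (i + 1) :=
  (fun t => if h : (t : ℕ) ≤ i then p.1 ⟨t, by omega⟩ else s,
   fun t => if h : (t : ℕ) < i then p.2 ⟨t, h⟩ else a)

/-- The path of length `0` at state `s`. -/
def constPath (s : S) : Path S A 0 := (fun _ => s, fun t => t.elim0)

/-- A path of the MDP: all stochastic steps have positive probability. -/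
def MDP.ValidPath (M : MDP S A) {i : ℕ} (p : Path S A i) : Prop :=
  ∀ t : Fin i, 0 < M.P (p.1 t.castSucc) (p.2 t) (p.1 t.succ)

/-- A (probabilistic) strategy maps every finite path to weights on actions. -/
def Strategy (S A : Type) : Type := ∀ i : ℕ, Path S A i → A → ℝ

def IsStrategy [Fintype A] (σ : Strategy S A) : Prop :=
  (∀ i p a, 0 ≤ σ i p a) ∧ ∀ i p, ∑ a, σ i p a = 1

/-- A strategy is deterministic if each of its distributions has singleton support. -/
def Deterministic (σ : Strategy S A) : Prop :=
  ∀ (i : ℕ) (p : Path S A i), ∃ a, ∀ b, (0 < σ i p b ↔ b = a)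

/-- Probability `Pr^i_{M,σ}(p) = ∏_t σ(p|_t)(a_t) · P(s_t,a_t)(s_{t+1})`. -/
def pathProb (M : MDP S A) (σ : Strategy S A) {i : ℕ} (p : Path S A i) : ℝ :=
  ∏ t : Fin i,
    σ t (Path.take p t t.isLt.le) (p.2 t) * M.P (p.1 t.castSucc) (p.2 t) (p.1 t.succ)

/-- Compatibility with a probabilistic strategy: all played actions are in the support. -/
def CompatStrat (σ : Strategy S A) {i : ℕ} (p : Path S A i) : Prop :=
  ∀ t : Fin i, 0 < σ t (Path.take p t t.isLt.le) (p.2 t)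

/-- Total reward of a path. -/
def pathReward (M : MDP S A) {i : ℕ} (p : Path S A i) : ℝ :=
  (∑ t : Fin i, M.R (p.1 t.castSucc) (p.2 t)) + M.RT (Path.lastState p)

/-- Expected total reward of strategy `σ` with horizon `i` from `s`. -/
def ValStrat [Fintype S] [Fintype A] (M : MDP S A) (σ : Strategy S A) (i : ℕ) (s : S) : ℝ :=
  ∑ p : Path S A i, if Path.first p = s then pathProb M σ p * pathReward M p else 0

/-- Optimal expected total reward of horizon `i` from `s`. -/
def MDP.Val [Fintype S] [Fintype A] (M : MDP S A) (i : ℕ) (s : S) : ℝ :=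
  ⨆ σ : {σ : Strategy S A // IsStrategy σ}, ValStrat M σ.1 i s

/-- Optimal actions: maximizers in the value-iteration recurrence (`opt^{k+1}`). -/
def MDP.optA [Fintype S] [Fintype A] (M : MDP S A) (k : ℕ) (s : S) : Set A :=
  {a | ∀ b, M.R s b + ∑ s', M.P s b s' * M.Val k s' ≤
        M.R s a + ∑ s', M.P s a s' * M.Val k s'}

/-- States of the depth-`H` tree unfolding: paths of length at most `H`. -/
abbrev UState (S A : Type) (H : ℕ) : Type := Σ i : Fin (H + 1), Path S A (i : ℕ)

def UState.root (H : ℕ) (s₀ : S) : UState S A H := ⟨⟨0, by omega⟩, constPath s₀⟩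

/-- Depth-`H` tree unfolding of an MDP (with self loops at the leaves). -/
def MDP.unfold (M : MDP S A) (H : ℕ) : MDP (UState S A H) A where
  P := fun q a q' =>
    if h : (q.1 : ℕ) < H then
      if q' = ⟨⟨(q.1 : ℕ) + 1, by omega⟩, Path.snoc q.2 a (Path.lastState q'.2)⟩ then
        M.P (Path.lastState q.2) a (Path.lastState q'.2)
      else 0
    else if q' = q then 1 else 0
  R := fun q a => if (q.1 : ℕ) < H then M.R (Path.lastState q.2) a else 0
  RT := fun q => M.RT (Path.lastState q.2)

/-- A symbolic advice: a predicate on finite paths. -/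
def Advice (S A : Type) : Type := ∀ i : ℕ, Path S A i → Prop

/-- A nondeterministic strategy. -/
def NStrategy (S A : Type) : Type := ∀ i : ℕ, Path S A i → Set A

/-- The nondeterministic strategy `σ_A^H` induced by an advice. -/
def advStrat (M : MDP S A) (Adv : Advice S A) (H : ℕ) : NStrategy S A := fun i p =>
  if h : i < H then
    {a | ∃ q : Path S A H, Adv H q ∧ Path.take q i h.le = p ∧ q.2 ⟨i, h⟩ = a ∧
      ∀ t : Fin H, i ≤ (t : ℕ) → 0 < M.P (q.1 t.castSucc) (q.2 t) (q.1 t.succ)}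
  else Set.univ

/-- The nondeterministic environment strategy `τ_A^H` induced by an advice. -/
def envStrat (M : MDP S A) (Adv : Advice S A) (H : ℕ) :
    ∀ i : ℕ, Path S A i → A → Set S := fun i p a =>
  if h : i < H then
    {s | 0 < M.P (Path.lastState p) a s ∧
      ∃ q : Path S A H, Adv H q ∧ Path.take q i h.le = p ∧ q.2 ⟨i, h⟩ = a ∧
        q.1 ⟨i + 1, by omega⟩ = s ∧
        ∀ t : Fin H, i ≤ (t : ℕ) → 0 < M.P (q.1 t.castSucc) (q.2 t) (q.1 t.succ)}
  else {s | 0 < M.P (Path.lastState p) a s}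

/-- Compatibility with a nondeterministic strategy. -/
def CompatN (σ : NStrategy S A) {i : ℕ} (p : Path S A i) : Prop :=
  ∀ t : Fin i, p.2 t ∈ σ t (Path.take p t t.isLt.le)

/-- Compatibility with a nondeterministic environment strategy. -/
def CompatE (τ : ∀ i : ℕ, Path S A i → A → Set S) {i : ℕ} (p : Path S A i) : Prop :=
  ∀ t : Fin i, p.1 t.succ ∈ τ t (Path.take p t t.isLt.le) (p.2 t)

/-- `FPaths^H_M(s₀, A)`: length-`H` paths of `M` from `s₀` satisfying the advice. -/
def FPathsAdv (M : MDP S A) (H : ℕ) (s₀ : S) (Adv : Advice S A) : Set (Path S A H) :=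
  {p | M.ValidPath p ∧ Path.first p = s₀ ∧ Adv H p}

/-- `FPaths^H_M(s₀, σ)` for a nondeterministic strategy. -/
def FPathsN (M : MDP S A) (H : ℕ) (s₀ : S) (σ : NStrategy S A) : Set (Path S A H) :=
  {p | M.ValidPath p ∧ Path.first p = s₀ ∧ CompatN σ p}

/-- `FPaths^H_M(s₀, τ)` for a nondeterministic environment strategy. -/
def FPathsE (M : MDP S A) (H : ℕ) (s₀ : S) (τ : ∀ i : ℕ, Path S A i → A → Set S) :
    Set (Path S A H) :=
  {p | M.ValidPath p ∧ Path.first p = s₀ ∧ CompatE τ p}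

/-- `σ` witnesses that `Adv` is strongly enforceable from `s₀` with horizon `H`. -/
def Enforces (M : MDP S A) (Adv : Advice S A) (s₀ : S) (H : ℕ) (σ : NStrategy S A) : Prop :=
  FPathsN M H s₀ σ = FPathsAdv M H s₀ Adv ∧
  ∀ (i : ℕ) (p : Path S A i), i < H → M.ValidPath p → Path.first p = s₀ →
    CompatN σ p → (σ i p).Nonempty

def StronglyEnforceable (M : MDP S A) (Adv : Advice S A) (s₀ : S) (H : ℕ) : Prop :=
  ∃ σ : NStrategy S A, Enforces M Adv s₀ H σ

/-- The pruned unfolding `T(M, s₀, H, A)`: transitions not compatible with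
`σ_A^H` or `τ_A^H` are removed. -/
def prunedUnfold (M : MDP S A) (Adv : Advice S A) (H : ℕ) : MDP (UState S A H) A where
  P := fun q a q' =>
    if (q.1 : ℕ) < H then
      if a ∈ advStrat M Adv H (q.1 : ℕ) q.2 ∧
          Path.lastState q'.2 ∈ envStrat M Adv H (q.1 : ℕ) q.2 a then
        (M.unfold H).P q a q'
      else 0
    else (M.unfold H).P q a q'
  R := (M.unfold H).R
  RT := (M.unfold H).RT

/-- The optimality assumption: every horizon-`H` optimal deterministic strategy is
contained in `σ_A^H`. -/
def OptAssumption [Fintype S] [Fintype A] (M : MDP S A) (Adv : Advice S A) (H : ℕ) : Prop :=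
  ∀ (s : S) (σ : Strategy S A), IsStrategy σ → Deterministic σ →
    ValStrat M σ H s = M.Val H s →
    ∀ (i : ℕ) (p : Path S A i) (a : A), 0 < σ i p a → a ∈ advStrat M Adv H i p

/-- Actions achievable as the first action of some (deterministic) strategy attaining
the optimal expected total reward of horizon `H` at `s`. -/
def optFirst {T : Type} [Fintype T] [Fintype A] (N : MDP T A) (H : ℕ) (s : T) : Set A :=
  {a | ∃ σ : Strategy T A, IsStrategy σ ∧ Deterministic σ ∧
    ValStrat N σ H s = N.Val H s ∧ 0 < σ 0 (constPath s) a}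

/-- All total rewards of paths of length at most `H` lie in `[0,1]`. -/
def BoundedRewards (M : MDP S A) (H : ℕ) : Prop :=
  ∀ (i : ℕ) (p : Path S A i), i ≤ H → pathReward M p ∈ Set.Icc (0 : ℝ) 1

/-- `WinsAux M T k i h p` says: from the node `p` (of depth `i = H - k`), the
alternation `∃a ∀s ∃a ∀s … ∀s_last` can force reaching a length-`H` path in `T`,
states being quantified over the support of the current transition. -/
def WinsAux (M : MDP S A) {H : ℕ} (T : Path S A H → Prop) :
    (k : ℕ) → (i : ℕ) → i + k = H → Path S A i → Prop
  | 0, i, h, p => T ((show i = H by omega) ▸ p)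
  | k + 1, i, h, p =>
      ∃ a : A, ∀ s : S, 0 < M.P (Path.lastState p) a s →
        WinsAux M T k (i + 1) (by omega) (Path.snoc p a s)

/-- `Adv'` is the strongly enforceable advice extracted from `Adv` (greatest
strongly enforceable advice below `Adv`, from `s₀` with horizon `H`). -/
def ExtractedFrom (M : MDP S A) (Adv Adv' : Advice S A) (s₀ : S) (H : ℕ) : Prop :=
  StronglyEnforceable M Adv' s₀ H ∧
  FPathsAdv M H s₀ Adv' ⊆ FPathsAdv M H s₀ Adv ∧
  ∀ Adv'' : Advice S A, StronglyEnforceable M Adv'' s₀ H →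
    FPathsAdv M H s₀ Adv'' ⊆ FPathsAdv M H s₀ Adv →
    FPathsAdv M H s₀ Adv'' ⊆ FPathsAdv M H s₀ Adv'

/-- Player 1 can enforce, from node `p` of depth `i`, that every continuation
following some deterministic action-selection `f` (against arbitrary stochastic
successors in the support) reaches the target set `T` of leaves. -/
def CanEnforce (M : MDP S A) {H : ℕ} (T : Set (Path S A H)) (i : ℕ) (hi : i ≤ H)
    (p : Path S A i) : Prop :=
  ∃ f : ∀ j : ℕ, Path S A j → A,
    ∀ q : Path S A H, Path.take q i hi = p →
      (∀ t : Fin H, i ≤ (t : ℕ) → q.2 t = f t (Path.take q t t.isLt.le)) →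
      (∀ t : Fin H, i ≤ (t : ℕ) → 0 < M.P (q.1 t.castSucc) (q.2 t) (q.1 t.succ)) →
      q ∈ T

/-- The advice whose satisfied length-`H` paths are exactly the paths to `T`
remaining within winning nodes. -/
def winAdvice (M : MDP S A) {H : ℕ} (T : Set (Path S A H)) : Advice S A :=
  fun j q => ∀ h : j = H, (h ▸ q) ∈ T ∧
    ∀ (t : ℕ) (ht : t ≤ H), CanEnforce M T t ht (Path.take (h ▸ q) t ht)

/-- The uniform strategy. -/
def uniformStrategy (S A : Type) [Fintype A] : Strategy S A :=
  fun _ _ _ => 1 / (Fintype.card A : ℝ)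

end PaperMCTS

end
namespace PaperMCTS
noncomputable section
variable {S A : Type}

/-! ### Basic path lemmas -/

lemma Path.take_take {i : ℕ} (p : Path S A i) (j k : ℕ) (hj : j ≤ i) (hk : k ≤ j) :
    Path.take (Path.take p j hj) k hk = Path.take p k (hk.trans hj) := rfl

lemma Path.take_self {i : ℕ} (p : Path S A i) : Path.take p i le_rfl = p := by
  unfold Path.take
  exact Prod.ext (funext fun t => congrArg p.1 (Fin.eta t t.isLt))
    (funext fun t => congrArg p.2 (Fin.eta t t.isLt))

lemma Path.take_zero {i : ℕ} (p : Path S A i) (h : 0 ≤ i) :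
    Path.take p 0 h = constPath (p.1 0) := by
  unfold Path.take constPath
  refine Prod.ext (funext fun t => ?_) (funext fun t => t.elim0)
  have : t = 0 := Fin.ext (by omega)
  subst this
  rfl

lemma Path.take_succ {i : ℕ} (p : Path S A i) (j : ℕ) (h : j + 1 ≤ i) :
    Path.take p (j + 1) h =
      Path.snoc (Path.take p j (by omega)) (p.2 ⟨j, by omega⟩) (p.1 ⟨j + 1, by omega⟩) := by
  unfold Path.take Path.snoc
  refine Prod.ext (funext fun t => ?_) (funext fun t => ?_)
  · by_cases ht : (t : ℕ) ≤ j
    · simp only [ht, dif_pos]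
    · simp only [ht, dif_neg, not_false_iff]
      have : (t : ℕ) = j + 1 := by have := t.isLt; omega
      exact congrArg p.1 (Fin.ext this)
  · by_cases ht : (t : ℕ) < j
    · simp only [ht, dif_pos]
    · simp only [ht, dif_neg, not_false_iff]
      have : (t : ℕ) = j := by have := t.isLt; omega
      exact congrArg p.2 (Fin.ext this)

lemma Path.lastState_take {i : ℕ} (p : Path S A i) (j : ℕ) (h : j ≤ i) :
    Path.lastState (Path.take p j h) = p.1 ⟨j, by omega⟩ := rfl

lemma Path.first_take {i : ℕ} (p : Path S A i) (j : ℕ) (h : j ≤ i) :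
    Path.first (Path.take p j h) = Path.first p := rfl

/-- Prepend a state and action to a path. -/
def Path.cons (s : S) (a : A) {i : ℕ} (p : Path S A i) : Path S A (i + 1) :=
  (fun t => match t with
    | ⟨0, _⟩ => s
    | ⟨u + 1, h⟩ => p.1 ⟨u, by omega⟩,
   fun t => match t with
    | ⟨0, _⟩ => a
    | ⟨u + 1, h⟩ => p.2 ⟨u, by omega⟩)

@[simp] lemma Path.cons_fst_zero (s : S) (a : A) {i : ℕ} (p : Path S A i) :
    (Path.cons s a p).1 0 = s := rfl

@[simp] lemma Path.cons_fst_succ (s : S) (a : A) {i : ℕ} (p : Path S A i) (t : Fin (i + 1)) :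
    (Path.cons s a p).1 t.succ = p.1 t := by
  rcases t with ⟨tv, htv⟩
  exact congrArg p.1 (Fin.ext rfl)

@[simp] lemma Path.cons_snd_zero (s : S) (a : A) {i : ℕ} (p : Path S A i) :
    (Path.cons s a p).2 0 = a := rfl

@[simp] lemma Path.cons_snd_succ (s : S) (a : A) {i : ℕ} (p : Path S A i) (t : Fin i) :
    (Path.cons s a p).2 t.succ = p.2 t := by
  rcases t with ⟨tv, htv⟩
  exact congrArg p.2 (Fin.ext rfl)

@[simp] lemma Path.first_cons (s : S) (a : A) {i : ℕ} (p : Path S A i) :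
    Path.first (Path.cons s a p) = s := rfl

@[simp] lemma Path.lastState_cons (s : S) (a : A) {i : ℕ} (p : Path S A i) :
    Path.lastState (Path.cons s a p) = Path.lastState p := by
  exact congrArg p.1 (Fin.ext rfl)

@[simp] lemma Path.first_constPath (s : S) : Path.first (constPath (S := S) (A := A) s) = s := rfl

@[simp] lemma Path.lastState_constPath (s : S) :
    Path.lastState (constPath (S := S) (A := A) s) = s := rfl

/-- The tail of a nonempty path. -/
def Path.tail {i : ℕ} (p : Path S A (i + 1)) : Path S A i :=
  (fun t => p.1 t.succ, fun t => p.2 t.succ)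

/-- Decomposition of nonempty paths. -/
def consEquiv (S A : Type) (i : ℕ) : S × A × Path S A i ≃ Path S A (i + 1) where
  toFun x := Path.cons x.1 x.2.1 x.2.2
  invFun q := (q.1 0, q.2 0, Path.tail q)
  left_inv := by
    rintro ⟨s, a, p⟩
    refine Prod.ext rfl (Prod.ext rfl ?_)
    refine Prod.ext (funext fun t => ?_) (funext fun t => ?_)
    · exact congrArg p.1 (Fin.ext rfl)
    · exact congrArg p.2 (Fin.ext rfl)
  right_inv := by
    intro q
    refine Prod.ext (funext fun t => ?_) (funext fun t => ?_)
    · rcases t with ⟨tv, htv⟩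
      rcases tv with _ | tv
      · rfl
      · exact congrArg q.1 (Fin.ext rfl)
    · rcases t with ⟨tv, htv⟩
      rcases tv with _ | tv
      · rfl
      · exact congrArg q.2 (Fin.ext rfl)

lemma Path.take_cons_zero (s : S) (a : A) {i : ℕ} (p : Path S A i) :
    Path.take (Path.cons s a p) 0 (by omega) = constPath s := by
  rw [Path.take_zero]; rfl

lemma Path.take_cons_succ (s : S) (a : A) {i : ℕ} (p : Path S A i) (j : ℕ)
    (h : j + 1 ≤ i + 1) :
    Path.take (Path.cons s a p) (j + 1) h = Path.cons s a (Path.take p j (by omega)) := by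
  unfold Path.take
  refine Prod.ext (funext fun t => ?_) (funext fun t => ?_)
  · rcases t with ⟨tv, htv⟩
    rcases tv with _ | tv
    · rfl
    · rfl
  · rcases t with ⟨tv, htv⟩
    rcases tv with _ | tv
    · rfl
    · rfl

/-! ### Probability and value lemmas -/

def zeroEquiv (S A : Type) : S ≃ Path S A 0 where
  toFun s := constPath s
  invFun p := p.1 0
  left_inv s := rfl
  right_inv p := by
    refine Prod.ext (funext fun t => ?_) (funext fun t => t.elim0)
    have : t = 0 := Fin.ext (by omega)
    subst this; rfl

lemma sum_zero_decomp [Fintype S] [Fintype A] (f : Path S A 0 → ℝ) :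
    ∑ p : Path S A 0, f p = ∑ s : S, f (constPath s) :=
  (Equiv.sum_comp (zeroEquiv S A) f).symm

lemma sum_cons_decomp [Fintype S] [Fintype A] {i : ℕ} (f : Path S A (i + 1) → ℝ) :
    ∑ p : Path S A (i + 1), f p
      = ∑ s : S, ∑ a : A, ∑ q : Path S A i, f (Path.cons s a q) := by
  rw [← Equiv.sum_comp (consEquiv S A i) f, Fintype.sum_prod_type]
  exact Finset.sum_congr rfl fun s' _ => Fintype.sum_prod_type _

/-- The strategy after playing `a` at `s`. -/
def shiftStrat (σ : Strategy S A) (s : S) (a : A) : Strategy S A :=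
  fun j q => σ (j + 1) (Path.cons s a q)

lemma shiftStrat_isStrategy [Fintype A] {σ : Strategy S A} (h : IsStrategy σ) (s : S) (a : A) :
    IsStrategy (shiftStrat σ s a) :=
  ⟨fun i p b => h.1 _ _ b, fun i p => h.2 _ _⟩

lemma pathProb_cons (M : MDP S A) (σ : Strategy S A) {i : ℕ} (s : S) (a : A)
    (p : Path S A i) :
    pathProb M σ (Path.cons s a p) =
      (σ 0 (constPath s) a * M.P s a (Path.first p)) * pathProb M (shiftStrat σ s a) p := by
  unfold pathProb
  rw [Fin.prod_univ_succ]
  congr 1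
  · have h0 : Path.take (Path.cons s a p) ((0 : Fin (i + 1)) : ℕ)
        (Fin.isLt _).le = constPath s := Path.take_cons_zero s a p
    rw [h0]
    rfl
  · refine Finset.prod_congr rfl fun t _ => ?_
    have h1 : Path.take (Path.cons s a p) ((t.succ : Fin (i + 1)) : ℕ) t.succ.isLt.le
        = Path.cons s a (Path.take p (t : ℕ) t.isLt.le) :=
      Path.take_cons_succ s a p (t : ℕ) (by omega)
    rw [h1]
    have e2 : (Path.cons s a p).2 t.succ = p.2 t := Path.cons_snd_succ s a p t
    have e3 : (Path.cons s a p).1 t.succ.castSucc = p.1 t.castSucc := by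
      rw [← Fin.succ_castSucc, Path.cons_fst_succ]
    have e4 : (Path.cons s a p).1 t.succ.succ = p.1 t.succ := Path.cons_fst_succ s a p t.succ
    rw [e2, e3, e4]
    rfl

lemma pathReward_cons (M : MDP S A) {i : ℕ} (s : S) (a : A) (p : Path S A i) :
    pathReward M (Path.cons s a p) = M.R s a + pathReward M p := by
  unfold pathReward
  rw [Fin.sum_univ_succ, Path.lastState_cons]
  have h0 : (Path.cons s a p).1 ((0 : Fin (i + 1)).castSucc) = s := rfl
  have h1 : (Path.cons s a p).2 (0 : Fin (i + 1)) = a := rfl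
  rw [h0, h1, add_assoc]
  have h2 : ∀ t : Fin i,
      M.R ((Path.cons s a p).1 t.succ.castSucc) ((Path.cons s a p).2 t.succ)
        = M.R (p.1 t.castSucc) (p.2 t) := by
    intro t
    have e3 : (Path.cons s a p).1 t.succ.castSucc = p.1 t.castSucc := by
      rw [← Fin.succ_castSucc, Path.cons_fst_succ]
    rw [e3, Path.cons_snd_succ]
  simp_rw [h2]

lemma sum_first_mul [Fintype S] [Fintype A] {i : ℕ} (f : S → ℝ) (g : Path S A i → ℝ) :
    ∑ p : Path S A i, f (Path.first p) * g p
      = ∑ s, f s * ∑ p : Path S A i, if Path.first p = s then g p else 0 := by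
  have h1 : ∀ s : S, f s * ∑ p : Path S A i, (if Path.first p = s then g p else 0)
      = ∑ p : Path S A i, (if Path.first p = s then f (Path.first p) * g p else 0) := by
    intro s
    rw [Finset.mul_sum]
    refine Finset.sum_congr rfl fun p _ => ?_
    split <;> simp_all
  simp_rw [h1]
  rw [Finset.sum_comm]
  refine Finset.sum_congr rfl fun p _ => ?_
  rw [Finset.sum_ite_eq]
  simp

lemma sum_pathProb_eq_one [Fintype S] [Fintype A] (M : MDP S A) (hM : M.IsProper) :
    ∀ (i : ℕ) (σ : Strategy S A), IsStrategy σ → ∀ s : S,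
      (∑ p : Path S A i, if Path.first p = s then pathProb M σ p else 0) = 1 := by
  intro i
  induction i with
  | zero =>
    intro σ hσ s
    rw [sum_zero_decomp]
    have h1 : ∀ s' : S, (if Path.first (constPath (A := A) s') = s
        then pathProb M σ (constPath s') else 0) = if s' = s then 1 else 0 := by
      intro s'
      have h2 : pathProb M σ (constPath (A := A) s') = 1 := by
        simp [pathProb]
      rw [h2]
      rfl
    simp_rw [h1, Finset.sum_ite_eq', Finset.mem_univ, if_true]
  | succ i ih =>
    intro σ hσ s
    rw [sum_cons_decomp]
    have hterm : ∀ (s' : S) (a : A) (q : Path S A i),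
        (if Path.first (Path.cons s' a q) = s then pathProb M σ (Path.cons s' a q) else 0)
          = if s' = s then
              (σ 0 (constPath s') a * M.P s' a (Path.first q)) *
                pathProb M (shiftStrat σ s' a) q else 0 := by
      intro s' a q
      rw [pathProb_cons, Path.first_cons]
    simp_rw [hterm]
    have hcol : ∀ s' : S,
        (∑ a : A, ∑ q : Path S A i, if s' = s then
            (σ 0 (constPath s') a * M.P s' a (Path.first q)) *
              pathProb M (shiftStrat σ s' a) q else 0)
          = if s' = s then
              (∑ a : A, ∑ q : Path S A i,
                (σ 0 (constPath s') a * M.P s' a (Path.first q)) *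
                  pathProb M (shiftStrat σ s' a) q) else 0 := by
      intro s'; split <;> simp
    simp_rw [hcol, Finset.sum_ite_eq', Finset.mem_univ, if_true]
    have hinner : ∀ a : A,
        (∑ q : Path S A i, (σ 0 (constPath s) a * M.P s a (Path.first q)) *
            pathProb M (shiftStrat σ s a) q) = σ 0 (constPath s) a := by
      intro a
      have h3 : ∀ q : Path S A i, (σ 0 (constPath s) a * M.P s a (Path.first q)) *
          pathProb M (shiftStrat σ s a) q
            = σ 0 (constPath s) a *
                (M.P s a (Path.first q) * pathProb M (shiftStrat σ s a) q) := by
        intro q; ring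
      simp_rw [h3, ← Finset.mul_sum]
      rw [sum_first_mul (f := fun s' => M.P s a s')
        (g := fun q => pathProb M (shiftStrat σ s a) q)]
      have h4 := fun s' => ih (shiftStrat σ s a) (shiftStrat_isStrategy hσ s a) s'
      simp_rw [h4, mul_one, (hM.2 s a), mul_one]
    simp_rw [hinner]
    exact hσ.2 0 (constPath s)

lemma ValStrat_zero [Fintype S] [Fintype A] (M : MDP S A) (σ : Strategy S A) (s : S) :
    ValStrat M σ 0 s = M.RT s := by
  unfold ValStrat
  rw [sum_zero_decomp]
  have h1 : ∀ s' : S, (if Path.first (constPath (A := A) s') = s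
      then pathProb M σ (constPath s') * pathReward M (constPath s') else 0)
      = if s' = s then M.RT s' else 0 := by
    intro s'
    have h2 : pathProb M σ (constPath (A := A) s') = 1 := by simp [pathProb]
    have h3 : pathReward M (constPath (A := A) s') = M.RT s' := by
      unfold pathReward
      simp
    rw [h2, h3, one_mul]
    rfl
  simp_rw [h1, Finset.sum_ite_eq', Finset.mem_univ, if_true]

lemma ValStrat_succ [Fintype S] [Fintype A] (M : MDP S A) (hM : M.IsProper)
    {σ : Strategy S A} (hσ : IsStrategy σ) (k : ℕ) (s : S) :
    ValStrat M σ (k + 1) s = ∑ a, σ 0 (constPath s) a *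
      (M.R s a + ∑ s', M.P s a s' * ValStrat M (shiftStrat σ s a) k s') := by
  unfold ValStrat
  rw [sum_cons_decomp]
  have hterm : ∀ (s' : S) (a : A) (q : Path S A k),
      (if Path.first (Path.cons s' a q) = s
          then pathProb M σ (Path.cons s' a q) * pathReward M (Path.cons s' a q) else 0)
        = if s' = s then
            ((σ 0 (constPath s') a * M.P s' a (Path.first q)) *
              pathProb M (shiftStrat σ s' a) q) * (M.R s' a + pathReward M q) else 0 := by
    intro s' a q
    rw [pathProb_cons, pathReward_cons, Path.first_cons]
  simp_rw [hterm]
  have hcol : ∀ s' : S,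
      (∑ a : A, ∑ q : Path S A k, if s' = s then
          ((σ 0 (constPath s') a * M.P s' a (Path.first q)) *
            pathProb M (shiftStrat σ s' a) q) * (M.R s' a + pathReward M q) else 0)
        = if s' = s then
            (∑ a : A, ∑ q : Path S A k,
              ((σ 0 (constPath s') a * M.P s' a (Path.first q)) *
                pathProb M (shiftStrat σ s' a) q) * (M.R s' a + pathReward M q)) else 0 := by
    intro s'; split <;> simp
  simp_rw [hcol, Finset.sum_ite_eq', Finset.mem_univ, if_true]
  refine Finset.sum_congr rfl fun a _ => ?_
  have expand : ∀ q : Path S A k,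
      ((σ 0 (constPath s) a * M.P s a (Path.first q)) *
          pathProb M (shiftStrat σ s a) q) * (M.R s a + pathReward M q)
        = σ 0 (constPath s) a *
            ((M.R s a) * (M.P s a (Path.first q) * pathProb M (shiftStrat σ s a) q)
              + M.P s a (Path.first q) *
                  (pathProb M (shiftStrat σ s a) q * pathReward M q)) := by
    intro q; ring
  simp_rw [expand, ← Finset.mul_sum]
  congr 1
  rw [Finset.sum_add_distrib, ← Finset.mul_sum]
  congr 1
  · rw [sum_first_mul (f := fun s' => M.P s a s')
      (g := fun q => pathProb M (shiftStrat σ s a) q)]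
    have h4 := fun s' => sum_pathProb_eq_one M hM k (shiftStrat σ s a)
      (shiftStrat_isStrategy hσ s a) s'
    simp_rw [h4, mul_one, (hM.2 s a), mul_one]
  · rw [sum_first_mul (f := fun s' => M.P s a s')
      (g := fun q => pathProb M (shiftStrat σ s a) q * pathReward M q)]

/-! ### Value iteration and the greedy strategy -/

section ValIter
variable [Fintype S] [Fintype A] [Nonempty A]

def valIter (M : MDP S A) : ℕ → S → ℝ := fun k =>
  Nat.rec (fun s => M.RT s)
    (fun _ v s => Finset.univ.sup' Finset.univ_nonempty
      (fun a => M.R s a + ∑ s', M.P s a s' * v s')) k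

lemma valIter_zero (M : MDP S A) (s : S) : valIter M 0 s = M.RT s := rfl

lemma valIter_succ (M : MDP S A) (k : ℕ) (s : S) :
    valIter M (k + 1) s = Finset.univ.sup' Finset.univ_nonempty
      (fun a => M.R s a + ∑ s', M.P s a s' * valIter M k s') := rfl

lemma ValStrat_le_valIter (M : MDP S A) (hM : M.IsProper) :
    ∀ (k : ℕ) (σ : Strategy S A), IsStrategy σ → ∀ s, ValStrat M σ k s ≤ valIter M k s := by
  intro k
  induction k with
  | zero => intro σ hσ s; rw [ValStrat_zero]; exact le_rfl
  | succ k ih =>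
    intro σ hσ s
    rw [ValStrat_succ M hM hσ]
    have step : ∀ a : A, σ 0 (constPath s) a *
        (M.R s a + ∑ s', M.P s a s' * ValStrat M (shiftStrat σ s a) k s')
          ≤ σ 0 (constPath s) a * valIter M (k + 1) s := by
      intro a
      refine mul_le_mul_of_nonneg_left ?_ (hσ.1 0 (constPath s) a)
      have hle : M.R s a + ∑ s', M.P s a s' * ValStrat M (shiftStrat σ s a) k s'
          ≤ M.R s a + ∑ s', M.P s a s' * valIter M k s' := by
        refine add_le_add (le_refl _) (Finset.sum_le_sum fun s' _ => ?_)
        exact mul_le_mul_of_nonneg_left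
          (ih (shiftStrat σ s a) (shiftStrat_isStrategy hσ s a) s') (hM.1 s a s')
      refine hle.trans ?_
      rw [valIter_succ]
      exact Finset.le_sup' (fun a => M.R s a + ∑ s', M.P s a s' * valIter M k s')
        (Finset.mem_univ a)
    refine (Finset.sum_le_sum fun a _ => step a).trans ?_
    rw [← Finset.sum_mul, hσ.2 0 (constPath s), one_mul]

def greedyAct (M : MDP S A) (k : ℕ) (s : S) : A :=
  Classical.choose (Finset.exists_mem_eq_sup' (Finset.univ_nonempty (α := A))
    (fun a => M.R s a + ∑ s', M.P s a s' * valIter M k s'))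

lemma greedyAct_spec (M : MDP S A) (k : ℕ) (s : S) :
    valIter M (k + 1) s
      = M.R s (greedyAct M k s) + ∑ s', M.P s (greedyAct M k s) s' * valIter M k s' := by
  rw [valIter_succ]
  exact (Classical.choose_spec (Finset.exists_mem_eq_sup' (Finset.univ_nonempty (α := A))
    (fun a => M.R s a + ∑ s', M.P s a s' * valIter M k s'))).2

/-- The greedy (optimal) deterministic strategy for horizon `k`. -/
def greedy (M : MDP S A) (k : ℕ) : Strategy S A :=
  fun j p a => if a = greedyAct M (k - 1 - j) (Path.lastState p) then 1 else 0

lemma greedy_isStrategy (M : MDP S A) (k : ℕ) : IsStrategy (greedy M k) := by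
  constructor
  · intro i p a
    unfold greedy
    split <;> norm_num
  · intro i p
    simp [greedy]

lemma greedy_det (M : MDP S A) (k : ℕ) : Deterministic (greedy M k) := by
  intro i p
  refine ⟨greedyAct M (k - 1 - i) (Path.lastState p), fun b => ?_⟩
  unfold greedy
  split <;> simp_all

lemma shift_greedy (M : MDP S A) (k : ℕ) (s : S) (a : A) :
    shiftStrat (greedy M (k + 1)) s a = greedy M k := by
  funext j q b
  show greedy M (k + 1) (j + 1) (Path.cons s a q) b = greedy M k j q b
  unfold greedy
  rw [Path.lastState_cons]
  have : k + 1 - 1 - (j + 1) = k - 1 - j := by omega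
  rw [this]

lemma greedy_opt (M : MDP S A) (hM : M.IsProper) :
    ∀ (k : ℕ) (s : S), ValStrat M (greedy M k) k s = valIter M k s := by
  intro k
  induction k with
  | zero => intro s; rw [ValStrat_zero]; rfl
  | succ k ih =>
    intro s
    rw [ValStrat_succ M hM (greedy_isStrategy M (k + 1))]
    have hsh : ∀ a : A, shiftStrat (greedy M (k + 1)) s a = greedy M k := shift_greedy M k s
    have hg : ∀ a : A, greedy M (k + 1) 0 (constPath s) a
        = if a = greedyAct M k s then 1 else 0 := by
      intro a
      unfold greedy
      rw [Path.lastState_constPath]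
      norm_num
    simp_rw [hsh, hg, ih, ite_mul, one_mul, zero_mul, Finset.sum_ite_eq', Finset.mem_univ,
      if_true]
    exact (greedyAct_spec M k s).symm

lemma uniform_isStrategy : IsStrategy (uniformStrategy S A) := by
  constructor
  · intro i p a
    unfold uniformStrategy
    positivity
  · intro i p
    unfold uniformStrategy
    rw [Finset.sum_const, nsmul_eq_mul, Finset.card_univ]
    rw [mul_one_div, div_self]
    exact_mod_cast Fintype.card_ne_zero

instance : Nonempty {σ : Strategy S A // IsStrategy σ} :=
  ⟨⟨uniformStrategy S A, uniform_isStrategy⟩⟩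

lemma valStrat_bddAbove (M : MDP S A) (hM : M.IsProper) (k : ℕ) (s : S) :
    BddAbove (Set.range fun σ : {σ : Strategy S A // IsStrategy σ} => ValStrat M σ.1 k s) := by
  refine ⟨valIter M k s, ?_⟩
  rintro x ⟨σ, rfl⟩
  exact ValStrat_le_valIter M hM k σ.1 σ.2 s

lemma Val_eq_valIter (M : MDP S A) (hM : M.IsProper) (k : ℕ) (s : S) :
    M.Val k s = valIter M k s := by
  refine le_antisymm (ciSup_le fun σ => ValStrat_le_valIter M hM k σ.1 σ.2 s) ?_
  have h := le_ciSup (valStrat_bddAbove M hM k s)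
    (⟨greedy M k, greedy_isStrategy M k⟩ : {σ : Strategy S A // IsStrategy σ})
  rw [greedy_opt M hM k s] at h
  exact h

lemma greedy_valstrat_eq_val (M : MDP S A) (hM : M.IsProper) (k : ℕ) (s : S) :
    ValStrat M (greedy M k) k s = M.Val k s := by
  rw [Val_eq_valIter M hM, greedy_opt M hM]

end ValIter

/-! ### Embedding paths of `M` into the unfolding -/

section Unfold

/-- Embed a path of `M` (of length `i ≤ H`) as a path of the depth-`H` unfolding. -/
def embedPath (H : ℕ) {i : ℕ} (hi : i ≤ H) (p : Path S A i) : Path (UState S A H) A i :=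
  (fun t => ⟨⟨(t : ℕ), by have := t.isLt; omega⟩,
    Path.take p (t : ℕ) (by have := t.isLt; omega)⟩, p.2)

lemma embedPath_first {H i : ℕ} (hi : i ≤ H) (p : Path S A i) (s₀ : S) :
    Path.first (embedPath H hi p) = UState.root H s₀ ↔ p.1 0 = s₀ := by
  constructor
  · intro h
    have h2 := (Sigma.mk.inj_iff.mp h).2
    have h3 : Path.take p 0 (by omega) = constPath s₀ := eq_of_heq h2
    have h4 : constPath (A := A) (p.1 0) = constPath s₀ :=
      (Path.take_zero p (by omega)).symm.trans h3
    exact congrArg Path.first h4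
  · intro h
    unfold Path.first embedPath UState.root
    have h3 : Path.take p 0 (by omega) = constPath s₀ :=
      (Path.take_zero p (by omega)).trans (congrArg constPath h)
    exact congrArg (Sigma.mk _) h3

lemma embedPath_take {H i : ℕ} (hi : i ≤ H) (p : Path S A i) (j : ℕ) (hj : j ≤ i) :
    Path.take (embedPath H hi p) j hj = embedPath H (hj.trans hi) (Path.take p j hj) := rfl

lemma embedPath_lastState {H i : ℕ} (hi : i ≤ H) (p : Path S A i) :
    Path.lastState (embedPath H hi p) = ⟨⟨i, by omega⟩, p⟩ :=
  congrArg (Sigma.mk _) (Path.take_self p)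

lemma embedPath_injective {H i : ℕ} (hi : i ≤ H) :
    Function.Injective (embedPath (S := S) (A := A) H (i := i) hi) := by
  intro p q h
  have h1 := congrArg Path.lastState h
  rw [embedPath_lastState, embedPath_lastState] at h1
  exact eq_of_heq (Sigma.mk.inj_iff.mp h1).2

variable [Fintype S] [Fintype A]

lemma unfold_P_nonneg (M : MDP S A) (hM : M.IsProper) (H : ℕ)
    (q : UState S A H) (a : A) (q' : UState S A H) : 0 ≤ (M.unfold H).P q a q' := by
  unfold MDP.unfold
  dsimp only
  split
  · split
    · exact hM.1 _ _ _
    · exact le_rfl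
  · split <;> norm_num

lemma pruned_P_nonneg (M : MDP S A) (hM : M.IsProper) (Adv : Advice S A) (H : ℕ)
    (q : UState S A H) (a : A) (q' : UState S A H) :
    0 ≤ (prunedUnfold M Adv H).P q a q' := by
  unfold prunedUnfold
  dsimp only
  split
  · split
    · exact unfold_P_nonneg M hM H q a q'
    · exact le_rfl
  · exact unfold_P_nonneg M hM H q a q'

lemma pruned_P_eq_zero (M : MDP S A) (Adv : Advice S A) {H : ℕ} {q q' : UState S A H} {a : A}
    (hq : (q.1 : ℕ) < H)
    (hne : q' ≠ ⟨⟨(q.1 : ℕ) + 1, by omega⟩, Path.snoc q.2 a (Path.lastState q'.2)⟩) :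
    (prunedUnfold M Adv H).P q a q' = 0 := by
  have hu : (M.unfold H).P q a q' = 0 := by
    unfold MDP.unfold
    dsimp only
    rw [dif_pos hq, if_neg hne]
  unfold prunedUnfold
  dsimp only
  rw [if_pos hq, hu]
  split <;> rfl

/-- The key computation: pruned transition probabilities along an embedded path. -/
lemma pruned_P_embed (M : MDP S A) (Adv : Advice S A) {H : ℕ} (p : Path S A H) (t : Fin H) :
    (prunedUnfold M Adv H).P ((embedPath H le_rfl p).1 t.castSucc) (p.2 t)
        ((embedPath H le_rfl p).1 t.succ)
      = if (p.2 t ∈ advStrat M Adv H (t : ℕ) (Path.take p (t : ℕ) t.isLt.le) ∧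
            p.1 t.succ ∈ envStrat M Adv H (t : ℕ) (Path.take p (t : ℕ) t.isLt.le) (p.2 t))
          then M.P (p.1 t.castSucc) (p.2 t) (p.1 t.succ) else 0 := by
  have hX : (embedPath H le_rfl p).1 t.castSucc
      = ⟨⟨(t : ℕ), by have := t.isLt; omega⟩, Path.take p (t : ℕ) t.isLt.le⟩ := rfl
  have hY : (embedPath H le_rfl p).1 t.succ
      = ⟨⟨(t : ℕ) + 1, by have := t.isLt; omega⟩,
          Path.take p ((t : ℕ) + 1) t.isLt⟩ := rfl
  have hlastY : Path.lastState (Path.take p ((t : ℕ) + 1) t.isLt) = p.1 t.succ := by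
    rw [Path.lastState_take]
    exact congrArg p.1 (Fin.ext rfl)
  have hsnoc : Path.take p ((t : ℕ) + 1) t.isLt
      = Path.snoc (Path.take p (t : ℕ) t.isLt.le) (p.2 t) (p.1 t.succ) := by
    rw [Path.take_succ p (t : ℕ) t.isLt]
    have e1 : p.2 ⟨(t : ℕ), by omega⟩ = p.2 t := congrArg p.2 (Fin.ext rfl)
    have e2 : p.1 ⟨(t : ℕ) + 1, by omega⟩ = p.1 t.succ := congrArg p.1 (Fin.ext rfl)
    rw [e1, e2]
  have hunf : (M.unfold H).P ((embedPath H le_rfl p).1 t.castSucc) (p.2 t)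
      ((embedPath H le_rfl p).1 t.succ) = M.P (p.1 t.castSucc) (p.2 t) (p.1 t.succ) := by
    rw [hX, hY]
    unfold MDP.unfold
    dsimp only
    rw [dif_pos t.isLt, if_pos]
    · rw [Path.lastState_take, Path.lastState_take]
      have e1 : p.1 (⟨(t : ℕ), by have := t.isLt; omega⟩ : Fin (H + 1)) = p.1 t.castSucc :=
        congrArg p.1 (Fin.ext rfl)
      have e2 : p.1 (⟨(t : ℕ) + 1, by have := t.isLt; omega⟩ : Fin (H + 1)) = p.1 t.succ :=
        congrArg p.1 (Fin.ext rfl)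
      rw [e1, e2]
    · refine congrArg (Sigma.mk _) ?_
      rw [show Path.lastState (Path.take p ((t : ℕ) + 1) t.isLt) = p.1 t.succ from hlastY]
      exact hsnoc
  conv_lhs => rw [show (prunedUnfold M Adv H).P = fun q a q' =>
    if (q.1 : ℕ) < H then
      if a ∈ advStrat M Adv H (q.1 : ℕ) q.2 ∧
          Path.lastState q'.2 ∈ envStrat M Adv H (q.1 : ℕ) q.2 a then
        (M.unfold H).P q a q'
      else 0
    else (M.unfold H).P q a q' from rfl]
  dsimp only
  rw [hX, hY]
  dsimp only
  rw [if_pos t.isLt, hlastY, ← hunf, hX, hY]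

lemma pruned_R_embed (M : MDP S A) (Adv : Advice S A) {H : ℕ} (p : Path S A H) (t : Fin H) :
    (prunedUnfold M Adv H).R ((embedPath H le_rfl p).1 t.castSucc) (p.2 t)
      = M.R (p.1 t.castSucc) (p.2 t) := by
  have hX : (embedPath H le_rfl p).1 t.castSucc
      = ⟨⟨(t : ℕ), by have := t.isLt; omega⟩, Path.take p (t : ℕ) t.isLt.le⟩ := rfl
  show (M.unfold H).R _ _ = _
  rw [hX]
  unfold MDP.unfold
  dsimp only
  rw [if_pos t.isLt, Path.lastState_take]
  exact congrArg (fun z => M.R z (p.2 t)) (congrArg p.1 (Fin.ext rfl))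

lemma pathReward_pruned_embed (M : MDP S A) (Adv : Advice S A) {H : ℕ} (p : Path S A H) :
    pathReward (prunedUnfold M Adv H) (embedPath H le_rfl p) = pathReward M p := by
  unfold pathReward
  have h2 : Path.lastState (embedPath H le_rfl p) = ⟨⟨H, by omega⟩, p⟩ :=
    embedPath_lastState le_rfl p
  rw [h2]
  have h3 : (prunedUnfold M Adv H).RT ⟨⟨H, by omega⟩, p⟩ = M.RT (Path.lastState p) := rfl
  rw [h3]
  refine congrArg (· + M.RT (Path.lastState p)) ?_
  exact Finset.sum_congr rfl fun t _ => pruned_R_embed M Adv p t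

/-- Push a strategy of `M` to the unfolding: act according to the current node. -/
def pushStrat (σ : Strategy S A) (H : ℕ) : Strategy (UState S A H) A :=
  fun i Q a => σ ((Q.1 (Fin.last i)).1 : ℕ) (Q.1 (Fin.last i)).2 a

lemma pushStrat_isStrategy {σ : Strategy S A} (hσ : IsStrategy σ) (H : ℕ) :
    IsStrategy (pushStrat σ H) :=
  ⟨fun i Q a => hσ.1 _ _ a, fun i Q => hσ.2 _ _⟩

lemma pushStrat_embed {σ : Strategy S A} {H : ℕ} (p : Path S A H) (t : Fin H) (a : A) :
    pushStrat σ H (t : ℕ) (Path.take (embedPath H le_rfl p) (t : ℕ) t.isLt.le) a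
      = σ (t : ℕ) (Path.take p (t : ℕ) t.isLt.le) a := by
  rw [embedPath_take]
  exact congrArg (fun r => σ (t : ℕ) r a) (Path.take_self (Path.take p (t : ℕ) t.isLt.le))

/-- Pull a strategy of the unfolding back to `M`. -/
def pullStrat [Nonempty A] (H : ℕ) (σh : Strategy (UState S A H) A) : Strategy S A :=
  fun i p => if h : i ≤ H then σh i (embedPath H h p) else uniformStrategy S A i p

lemma pullStrat_isStrategy [Nonempty A] {H : ℕ} {σh : Strategy (UState S A H) A}
    (hσh : IsStrategy σh) : IsStrategy (pullStrat H σh) := by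
  constructor
  · intro i p a
    unfold pullStrat
    split
    · exact hσh.1 _ _ a
    · exact uniform_isStrategy.1 i p a
  · intro i p
    unfold pullStrat
    split
    · exact hσh.2 _ _
    · exact uniform_isStrategy.2 i p

lemma pullStrat_embed [Nonempty A] {H : ℕ} (σh : Strategy (UState S A H) A)
    (p : Path S A H) (t : Fin H) (a : A) :
    pullStrat H σh (t : ℕ) (Path.take p (t : ℕ) t.isLt.le) a
      = σh (t : ℕ) (Path.take (embedPath H le_rfl p) (t : ℕ) t.isLt.le) a := by
  unfold pullStrat
  rw [dif_pos (le_of_lt t.isLt), embedPath_take]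

/-- Q in the support of the pruned unfolding starting at the root is an embedded path. -/
lemma pruned_path_range (M : MDP S A) (Adv : Advice S A) {H : ℕ} (s₀ : S)
    (σh : Strategy (UState S A H) A) (Q : Path (UState S A H) A H)
    (hfirst : Path.first Q = UState.root H s₀)
    (hprob : pathProb (prunedUnfold M Adv H) σh Q ≠ 0) :
    ∃ p : Path S A H, p.1 0 = s₀ ∧ Q = embedPath H le_rfl p := by
  unfold pathProb at hprob
  have hfacs := Finset.prod_ne_zero_iff.mp hprob
  set p : Path S A H := (fun t => Path.lastState (Q.1 t).2, Q.2) with hp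
  have hp0 : p.1 0 = s₀ := by
    show Path.lastState (Q.1 0).2 = s₀
    have h1 : Q.1 0 = UState.root H s₀ := hfirst
    rw [h1]
    rfl
  have key : ∀ (t : ℕ) (ht : t ≤ H),
      Q.1 ⟨t, by omega⟩ = ⟨⟨t, by omega⟩, Path.take p t ht⟩ := by
    intro t
    induction t with
    | zero =>
      intro ht
      have h1 : Q.1 ⟨0, by omega⟩ = UState.root H s₀ := hfirst
      rw [h1]
      unfold UState.root
      refine congrArg (Sigma.mk _) ?_
      rw [Path.take_zero, hp0]
    | succ t iht =>
      intro ht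
      have htH : t < H := by omega
      set u : Fin H := ⟨t, htH⟩ with hu
      have hfac := hfacs u (Finset.mem_univ u)
      have hPfac := (mul_ne_zero_iff.mp hfac).2
      have hcast : Q.1 u.castSucc = ⟨⟨t, by omega⟩, Path.take p t (by omega)⟩ := by
        have e : u.castSucc = (⟨t, by omega⟩ : Fin (H + 1)) := Fin.ext rfl
        rw [e]
        exact iht (by omega)
      by_contra hne
      apply hPfac
      rw [hcast]
      refine pruned_P_eq_zero M Adv (q := ⟨⟨t, by omega⟩, Path.take p t (by omega)⟩)
        (a := Q.2 u) (q' := Q.1 u.succ) htH ?_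
      intro heq
      exact hne (heq.trans (congrArg (Sigma.mk _) (Path.take_succ p t ht).symm))
  refine ⟨p, hp0, ?_⟩
  refine Prod.ext (funext fun t => ?_) rfl
  have e : t = ⟨(t : ℕ), by omega⟩ := Fin.ext rfl
  rw [e]
  exact key (t : ℕ) (by have := t.isLt; omega)

/-- Unrolling the value of the pruned unfolding into a sum over paths of `M`. -/
lemma ValStrat_pruned_unroll (M : MDP S A) (Adv : Advice S A) (H : ℕ) (s₀ : S)
    (σh : Strategy (UState S A H) A) :
    ValStrat (prunedUnfold M Adv H) σh H (UState.root H s₀)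
      = ∑ p : Path S A H, if Path.first p = s₀
          then pathProb (prunedUnfold M Adv H) σh (embedPath H le_rfl p) *
            pathReward (prunedUnfold M Adv H) (embedPath H le_rfl p) else 0 := by
  unfold ValStrat
  rw [← Finset.sum_filter_of_ne
    (p := fun Q => Q ∈ Finset.image (embedPath (S := S) (A := A) H le_rfl) Finset.univ)
    (by
      intro Q _ hQ
      by_cases hf : Path.first Q = UState.root H s₀
      · rw [if_pos hf] at hQ
        obtain ⟨p, _, rfl⟩ := pruned_path_range M Adv s₀ σh Q hf
          fun h => hQ (by rw [h, zero_mul])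
        exact Finset.mem_image_of_mem _ (Finset.mem_univ p)
      · exact absurd (if_neg hf) hQ)]
  rw [Finset.filter_mem_eq_inter, Finset.univ_inter]
  rw [Finset.sum_image (fun x _ y _ h => embedPath_injective le_rfl h)]
  refine Finset.sum_congr rfl fun p _ => ?_
  have hiff := embedPath_first (le_rfl : H ≤ H) p s₀
  by_cases h : Path.first p = s₀
  · rw [if_pos (hiff.mpr h), if_pos h]
  · rw [if_neg (fun hh => h (hiff.mp hh)), if_neg h]

end Unfold

/-! ### Strong enforceability: the advice strategy enforces the advice -/

lemma advStrat_enforces (M : MDP S A) (Adv : Advice S A) (s₀ : S) (H : ℕ)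
    (hSE : StronglyEnforceable M Adv s₀ H) :
    ∀ q : Path S A H, M.ValidPath q → Path.first q = s₀ →
      CompatN (advStrat M Adv H) q → Adv H q := by
  obtain ⟨σe, hEq, -⟩ := hSE
  intro q hv hf hc
  rcases Nat.eq_zero_or_pos H with h0 | hpos
  · subst h0
    have hq : q ∈ FPathsN M 0 s₀ σe := ⟨hv, hf, fun t => t.elim0⟩
    rw [hEq] at hq
    exact hq.2.2
  · set t : Fin H := ⟨H - 1, by omega⟩ with htdef
    have hct := hc t
    unfold advStrat at hct
    rw [dif_pos t.isLt] at hct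
    obtain ⟨r, hrAdv, hrtake, hract, hrpos⟩ := hct
    -- components of r and q agree up to index H-1
    have hstates : ∀ u : ℕ, (hu : u ≤ H - 1) → r.1 ⟨u, by omega⟩ = q.1 ⟨u, by omega⟩ := by
      intro u hu
      have := congrArg (fun z : Path S A (t : ℕ) =>
        z.1 ⟨u, by have e : (t : ℕ) = H - 1 := rfl; omega⟩) hrtake
      exact this
    have hacts : ∀ u : ℕ, (hu : u < H - 1) → r.2 ⟨u, by omega⟩ = q.2 ⟨u, by omega⟩ := by
      intro u hu
      have := congrArg (fun z : Path S A (t : ℕ) =>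
        z.2 ⟨u, by have e : (t : ℕ) = H - 1 := rfl; omega⟩) hrtake
      exact this
    have hacts' : ∀ u : Fin H, r.2 u = q.2 u := by
      intro u
      by_cases hu : (u : ℕ) < H - 1
      · have := hacts (u : ℕ) hu
        rwa [show (⟨(u : ℕ), by omega⟩ : Fin H) = u from Fin.ext rfl] at this
      · have hu' : (u : ℕ) = H - 1 := by have := u.isLt; omega
        have : u = t := Fin.ext hu'
        subst this
        exact hract
    have htakes : ∀ (u : ℕ) (hu : u ≤ H - 1), Path.take r u (by omega) = Path.take q u (by omega) := by
      intro u hu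
      have h1 : Path.take r u (by omega)
          = Path.take (Path.take r (H - 1) (by omega)) u hu := rfl
      have h2 : Path.take q u (by omega)
          = Path.take (Path.take q (H - 1) (by omega)) u hu := rfl
      rw [h1, h2]
      have h3 : Path.take r (H - 1) (by omega) = Path.take q (H - 1) (by omega) := hrtake
      rw [h3]
    -- r is valid
    have hrvalid : M.ValidPath r := by
      intro u
      by_cases hu : (u : ℕ) < H - 1
      · have e1 : r.1 u.castSucc = q.1 u.castSucc := by
          have := hstates (u : ℕ) (by omega)
          rwa [show (⟨(u : ℕ), by omega⟩ : Fin (H + 1)) = u.castSucc from Fin.ext rfl] at this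
        have e2 : r.1 u.succ = q.1 u.succ := by
          have := hstates ((u : ℕ) + 1) (by omega)
          rwa [show (⟨(u : ℕ) + 1, by omega⟩ : Fin (H + 1)) = u.succ from Fin.ext rfl] at this
        rw [e1, e2, hacts' u]
        exact hv u
      · exact hrpos u (by omega)
    have hrfirst : Path.first r = s₀ := by
      have := hstates 0 (by omega)
      have e : (⟨0, by omega⟩ : Fin (H + 1)) = 0 := Fin.ext rfl
      rw [e] at this
      exact this.trans hf
    have hrF : r ∈ FPathsAdv M H s₀ Adv := ⟨hrvalid, hrfirst, hrAdv⟩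
    rw [← hEq] at hrF
    have hcr : CompatN σe r := hrF.2.2
    have hqF : q ∈ FPathsN M H s₀ σe := by
      refine ⟨hv, hf, fun u => ?_⟩
      have h1 : Path.take q (u : ℕ) u.isLt.le = Path.take r (u : ℕ) u.isLt.le := by
        have := htakes (u : ℕ) (by have := u.isLt; omega)
        exact this.symm
      rw [h1, ← hacts' u]
      exact hcr u
    rw [hEq] at hqF
    exact hqF.2.2

/-! ### Comparison of values -/

section Main
variable [Fintype S] [Fintype A] [Nonempty A]

lemma pathProb_pruned_le_pull (M : MDP S A) (hM : M.IsProper) (Adv : Advice S A) {H : ℕ}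
    {σh : Strategy (UState S A H) A} (hσh : IsStrategy σh) (p : Path S A H) :
    pathProb (prunedUnfold M Adv H) σh (embedPath H le_rfl p)
      ≤ pathProb M (pullStrat H σh) p := by
  unfold pathProb
  refine Finset.prod_le_prod (fun t _ => ?_) (fun t _ => ?_)
  · exact mul_nonneg (hσh.1 _ _ _) (pruned_P_nonneg M hM Adv H _ _ _)
  · have hfσ : σh ((t : ℕ)) (Path.take (embedPath H le_rfl p) (t : ℕ) t.isLt.le)
        ((embedPath H le_rfl p).2 t)
          = pullStrat H σh (t : ℕ) (Path.take p (t : ℕ) t.isLt.le) (p.2 t) :=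
      (pullStrat_embed σh p t (p.2 t)).symm
    rw [hfσ]
    refine mul_le_mul_of_nonneg_left ?_ ((pullStrat_isStrategy hσh).1 _ _ _)
    have he : (embedPath H le_rfl p).2 t = p.2 t := rfl
    rw [he, pruned_P_embed M Adv p t]
    split
    · exact le_rfl
    · exact hM.1 _ _ _

lemma pathProb_pruned_push_eq (M : MDP S A) (hM : M.IsProper) (Adv : Advice S A) {H : ℕ}
    {σ : Strategy S A} (hσ : IsStrategy σ) (p : Path S A H)
    (hgood : M.ValidPath p → CompatStrat σ p →
      ∀ t : Fin H, p.2 t ∈ advStrat M Adv H (t : ℕ) (Path.take p (t : ℕ) t.isLt.le) ∧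
        p.1 t.succ ∈ envStrat M Adv H (t : ℕ) (Path.take p (t : ℕ) t.isLt.le) (p.2 t)) :
    pathProb (prunedUnfold M Adv H) (pushStrat σ H) (embedPath H le_rfl p)
      = pathProb M σ p := by
  have hfσ : ∀ t : Fin H, pushStrat σ H ((t : ℕ))
      (Path.take (embedPath H le_rfl p) (t : ℕ) t.isLt.le) ((embedPath H le_rfl p).2 t)
        = σ (t : ℕ) (Path.take p (t : ℕ) t.isLt.le) (p.2 t) := fun t =>
    pushStrat_embed p t (p.2 t)
  by_cases h0 : pathProb M σ p = 0
  · rw [h0]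
    unfold pathProb at h0 ⊢
    obtain ⟨t, -, ht⟩ := Finset.prod_eq_zero_iff.mp h0
    refine Finset.prod_eq_zero (Finset.mem_univ t) ?_
    rcases mul_eq_zero.mp ht with h | h
    · rw [hfσ t, h, zero_mul]
    · have he : (embedPath H le_rfl p).2 t = p.2 t := rfl
      rw [he, pruned_P_embed M Adv p t, h]
      split <;> exact mul_zero _
  · unfold pathProb at h0 ⊢
    have hfacs := Finset.prod_ne_zero_iff.mp h0
    have hvalid : M.ValidPath p := by
      intro t
      have := (mul_ne_zero_iff.mp (hfacs t (Finset.mem_univ t))).2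
      exact lt_of_le_of_ne (hM.1 _ _ _) (Ne.symm this)
    have hcompat : CompatStrat σ p := by
      intro t
      have := (mul_ne_zero_iff.mp (hfacs t (Finset.mem_univ t))).1
      exact lt_of_le_of_ne (hσ.1 _ _ _) (Ne.symm this)
    refine Finset.prod_congr rfl fun t _ => ?_
    have he : (embedPath H le_rfl p).2 t = p.2 t := rfl
    rw [hfσ t, he, pruned_P_embed M Adv p t, if_pos (hgood hvalid hcompat t)]

lemma ValStrat_pruned_le (M : MDP S A) (hM : M.IsProper) (Adv : Advice S A) {H : ℕ} (s₀ : S)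
    (hRew : BoundedRewards M H) {σh : Strategy (UState S A H) A} (hσh : IsStrategy σh) :
    ValStrat (prunedUnfold M Adv H) σh H (UState.root H s₀)
      ≤ ValStrat M (pullStrat H σh) H s₀ := by
  rw [ValStrat_pruned_unroll]
  unfold ValStrat
  refine Finset.sum_le_sum fun p _ => ?_
  split
  · rw [pathReward_pruned_embed]
    have hr := hRew H p le_rfl
    refine mul_le_mul_of_nonneg_right ?_ hr.1
    exact pathProb_pruned_le_pull M hM Adv hσh p
  · exact le_rfl

lemma ValStrat_pruned_push (M : MDP S A) (hM : M.IsProper) (Adv : Advice S A) {H : ℕ} (s₀ : S)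
    {σ : Strategy S A} (hσ : IsStrategy σ)
    (hgood : ∀ p : Path S A H, Path.first p = s₀ → M.ValidPath p → CompatStrat σ p →
      ∀ t : Fin H, p.2 t ∈ advStrat M Adv H (t : ℕ) (Path.take p (t : ℕ) t.isLt.le) ∧
        p.1 t.succ ∈ envStrat M Adv H (t : ℕ) (Path.take p (t : ℕ) t.isLt.le) (p.2 t)) :
    ValStrat (prunedUnfold M Adv H) (pushStrat σ H) H (UState.root H s₀)
      = ValStrat M σ H s₀ := by
  rw [ValStrat_pruned_unroll]
  unfold ValStrat
  refine Finset.sum_congr rfl fun p _ => ?_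
  split
  · rename_i hfirst
    rw [pathReward_pruned_embed, pathProb_pruned_push_eq M hM Adv hσ p (hgood p hfirst)]
  · rfl

end Main

end
end PaperMCTS

namespace PaperMCTS
/-- under a strongly enforceable advice satisfying the optimality
assumption, the value of the pruned unfolding equals the value of `M`. -/
theorem pruned_val_eq [Fintype S] [Fintype A] [Nonempty A] (M : MDP S A)
    (hM : M.IsProper) (Adv : Advice S A) (s₀ : S) (H : ℕ)
    (hRew : BoundedRewards M H)
    (hSE : StronglyEnforceable M Adv s₀ H) (hOpt : OptAssumption M Adv H) :
    (prunedUnfold M Adv H).Val H (UState.root H s₀) = M.Val H s₀ := by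
  classical
  have hgval : ValStrat M (greedy M H) H s₀ = M.Val H s₀ := greedy_valstrat_eq_val M hM H s₀
  have hcont := hOpt s₀ (greedy M H) (greedy_isStrategy M H) (greedy_det M H) hgval
  have hADV := advStrat_enforces M Adv s₀ H hSE
  have hgood : ∀ p : Path S A H, Path.first p = s₀ → M.ValidPath p →
      CompatStrat (greedy M H) p →
      ∀ t : Fin H, p.2 t ∈ advStrat M Adv H (t : ℕ) (Path.take p (t : ℕ) t.isLt.le) ∧
        p.1 t.succ ∈ envStrat M Adv H (t : ℕ) (Path.take p (t : ℕ) t.isLt.le) (p.2 t) := by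
    intro p hfirst hvalid hcompat
    have hCN : CompatN (advStrat M Adv H) p := fun u =>
      hcont (u : ℕ) (Path.take p (u : ℕ) u.isLt.le) (p.2 u) (hcompat u)
    have hAdv : Adv H p := hADV p hvalid hfirst hCN
    intro t
    refine ⟨hCN t, ?_⟩
    unfold envStrat
    rw [dif_pos t.isLt]
    refine ⟨?_, p, hAdv, rfl, ?_, ?_, ?_⟩
    · rw [Path.lastState_take]
      have e : p.1 (⟨(t : ℕ), by have := t.isLt; omega⟩ : Fin (H + 1)) = p.1 t.castSucc :=
        congrArg p.1 (Fin.ext rfl)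
      rw [e]
      exact hvalid t
    · exact congrArg p.2 (Fin.ext rfl)
    · exact congrArg p.1 (Fin.ext rfl)
    · intro u _
      exact hvalid u
  have hbdd : BddAbove (Set.range
      fun σh : {σ : Strategy (UState S A H) A // IsStrategy σ} =>
        ValStrat (prunedUnfold M Adv H) σh.1 H (UState.root H s₀)) := by
    refine ⟨valIter M H s₀, ?_⟩
    rintro x ⟨σh, rfl⟩
    exact (ValStrat_pruned_le M hM Adv s₀ hRew σh.2).trans
      (ValStrat_le_valIter M hM H _ (pullStrat_isStrategy σh.2) s₀)
  refine le_antisymm ?_ ?_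
  · refine ciSup_le fun σh => ?_
    refine (ValStrat_pruned_le M hM Adv s₀ hRew σh.2).trans ?_
    exact le_ciSup (valStrat_bddAbove M hM H s₀)
      (⟨pullStrat H σh.1, pullStrat_isStrategy σh.2⟩ : {σ : Strategy S A // IsStrategy σ})
  · rw [show M.Val H s₀ = ValStrat M (greedy M H) H s₀ from hgval.symm,
      ← ValStrat_pruned_push M hM Adv s₀ (greedy_isStrategy M H) hgood]
    exact le_ciSup hbdd
      (⟨pushStrat (greedy M H) H, pushStrat_isStrategy (greedy_isStrategy M H) H⟩ :
        {σ : Strategy (UState S A H) A // IsStrategy σ})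
end PaperMCTS
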